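/- For any matrix B ∈ ℝ^{M×N}, the generalized Huber function S_B is differentiable and its gradient satisfies ‖∇S_B(x)‖_∞ ≤ 1 for all x ∈ ℝ^N; that is, |∂S_B/∂x_n (x)| ≤ 1 for every coordinate n and every x ∈ ℝ^N. -/

import Mathlib

open Matrix

/-- The ℓ₁ norm on `ℝ^N`. -/
noncomputable def norm1 {N : ℕ} (v : Fin N → ℝ) : ℝ := ∑ n, |v n|

/-- The squared Euclidean (ℓ₂) norm on `ℝ^M`. -/
def norm2sq {M : ℕ} (u : Fin M → ℝ) : ℝ := ∑ m, (u m) ^ 2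

/-- The generalized Huber function
`S_B(x) = inf_v ( ‖v‖₁ + (1/2) ‖B(x - v)‖₂² )`. -/
noncomputable def genHuber {M N : ℕ} (B : Matrix (Fin M) (Fin N) ℝ) (x : Fin N → ℝ) : ℝ :=
  ⨅ v : Fin N → ℝ, (norm1 v + (1 / 2) * norm2sq (B.mulVec (x - v)))

/-- The generalized MC (GMC) penalty `ψ_B(x) = ‖x‖₁ - S_B(x)`. -/
noncomputable def gmcPenalty {M N : ℕ} (B : Matrix (Fin M) (Fin N) ℝ) (x : Fin N → ℝ) : ℝ :=
  norm1 x - genHuber B x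

/-!
The infimum defining `S_B(x)` is attained at some `v`, because the objective dominates `‖v‖₁`.
Keeping that `v` as a candidate at `x + h` gives, with `r = B(x - v)`, the quadratic upper
support `S_B(x + h) ≤ S_B(x) + ⟨Bᵀr, h⟩ + ½‖Bh‖²`. Being the infimum over `v` of a jointly convex
function, `S_B` is convex, and a convex function with a quadratic upper support at `x` is
differentiable there. Replacing a candidate `v` by `v + h` shows `S_B(x + h) ≤ S_B(x) + ‖h‖₁`, so
`S_B` is `1`-Lipschitz for the `ℓ₁` norm and every partial derivative has absolute value at
most `1`.
-/

theorem hasFDerivAt_of_two_mul_le_of_le_add_sq {E : Type*} [NormedAddCommGroup E]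
    [NormedSpace ℝ E] {f : E → ℝ} {L : E →L[ℝ] ℝ} {x : E} {C : ℝ}
    (hmid : ∀ h, 2 * f x ≤ f (x + h) + f (x - h))
    (hup : ∀ h, f (x + h) ≤ f x + L h + C * ‖h‖ ^ 2) :
    HasFDerivAt f L x := by
  have hrem : ∀ h, ‖f (x + h) - f x - L h‖ ≤ C * ‖‖h‖ ^ 2‖ := fun h => by
    have hdown := hup (-h)
    rw [← sub_eq_add_neg, map_neg, norm_neg] at hdown
    rw [Real.norm_eq_abs, abs_le, norm_pow, norm_norm]
    constructor <;> linarith [hmid h, hup h]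
  rw [hasFDerivAt_iff_isLittleO_nhds_zero]
  exact (Asymptotics.IsBigO.of_bound C (.of_forall hrem)).trans_isLittleO
    (Asymptotics.isLittleO_norm_pow_id one_lt_two)

section Norms

variable {N : ℕ}

theorem norm1_nonneg (v : Fin N → ℝ) : 0 ≤ norm1 v :=
  Finset.sum_nonneg fun _ _ => abs_nonneg _

theorem norm1_add_le (v w : Fin N → ℝ) : norm1 (v + w) ≤ norm1 v + norm1 w := by
  rw [norm1, norm1, norm1, ← Finset.sum_add_distrib]
  exact Finset.sum_le_sum fun n _ => abs_add_le _ _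

theorem norm1_smul (c : ℝ) (v : Fin N → ℝ) : norm1 (c • v) = |c| * norm1 v := by
  simp [norm1, abs_mul, Finset.mul_sum]

theorem norm_le_norm1 (v : Fin N → ℝ) : ‖v‖ ≤ norm1 v :=
  (pi_norm_le_iff_of_nonneg (norm1_nonneg v)).2 fun n =>
    Finset.single_le_sum (f := fun k => |v k|) (fun _ _ => abs_nonneg _) (Finset.mem_univ n)

theorem norm2sq_nonneg (u : Fin N → ℝ) : 0 ≤ norm2sq u :=
  Finset.sum_nonneg fun _ _ => sq_nonneg _

theorem norm2sq_add (u w : Fin N → ℝ) :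
    norm2sq (u + w) = norm2sq u + 2 * (u ⬝ᵥ w) + norm2sq w := by
  simp only [norm2sq, dotProduct, Pi.add_apply, Finset.mul_sum, ← Finset.sum_add_distrib]
  exact Finset.sum_congr rfl fun m _ => by ring

theorem norm2sq_add_le (u w : Fin N → ℝ) : norm2sq (u + w) ≤ 2 * (norm2sq u + norm2sq w) := by
  simp only [norm2sq, Pi.add_apply, Finset.mul_sum, ← Finset.sum_add_distrib]
  exact Finset.sum_le_sum fun m _ => by nlinarith [sq_nonneg (u m - w m)]

theorem norm2sq_smul (c : ℝ) (u : Fin N → ℝ) : norm2sq (c • u) = c ^ 2 * norm2sq u := by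
  simp [norm2sq, mul_pow, Finset.mul_sum]

theorem norm2sq_le_card_mul_sq_norm (u : Fin N → ℝ) : norm2sq u ≤ N * ‖u‖ ^ 2 := by
  calc norm2sq u ≤ ∑ _m : Fin N, ‖u‖ ^ 2 :=
        Finset.sum_le_sum fun m _ => by
          simpa only [Real.norm_eq_abs, sq_abs] using
            pow_le_pow_left₀ (norm_nonneg _) (norm_le_pi_norm u m) 2
    _ = N * ‖u‖ ^ 2 := by simp

theorem norm1_single (n : Fin N) (a : ℝ) : norm1 (Pi.single n a) = |a| := by
  simp [norm1, Pi.single_apply, apply_ite]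

theorem abs_apply_le_norm1_of_hasFDerivAt {f : (Fin N → ℝ) → ℝ} {L : (Fin N → ℝ) →L[ℝ] ℝ}
    {x : Fin N → ℝ} (hf : HasFDerivAt f L x) (hlip : ∀ y h, f (y + h) ≤ f y + norm1 h)
    (v : Fin N → ℝ) : |L v| ≤ norm1 v := by
  have hline : LipschitzWith (norm1 v).toNNReal fun t : ℝ => f (x + t • v) :=
    LipschitzWith.of_le_add_mul' _ fun s t => by
      have := hlip (x + t • v) ((s - t) • v)
      rwa [norm1_smul, add_assoc, ← add_smul, add_sub_cancel, mul_comm, ← Real.dist_eq] at this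
  simpa [Real.coe_toNNReal _ (norm1_nonneg v)] using
    HasDerivAt.le_of_lipschitz (hf.hasLineDerivAt v) hline

end Norms

section Huber

variable {M N : ℕ} (B : Matrix (Fin M) (Fin N) ℝ)

noncomputable def huberObjective (x v : Fin N → ℝ) : ℝ :=
  norm1 v + 1 / 2 * norm2sq (B *ᵥ (x - v))

theorem huberObjective_nonneg (x v : Fin N → ℝ) : 0 ≤ huberObjective B x v :=
  add_nonneg (norm1_nonneg v) (mul_nonneg (by norm_num) (norm2sq_nonneg _))

theorem continuous_huberObjective (x : Fin N → ℝ) : Continuous (huberObjective B x) := by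
  unfold huberObjective norm1 norm2sq
  fun_prop

theorem genHuber_le_huberObjective (x v : Fin N → ℝ) : genHuber B x ≤ huberObjective B x v :=
  ciInf_le ⟨0, by rintro _ ⟨w, rfl⟩; exact huberObjective_nonneg B x w⟩ v

theorem le_genHuber {x : Fin N → ℝ} {a : ℝ} (h : ∀ v, a ≤ huberObjective B x v) :
    a ≤ genHuber B x :=
  le_ciInf h

theorem exists_genHuber_eq_huberObjective (x : Fin N → ℝ) :
    ∃ v, genHuber B x = huberObjective B x v := by
  have hcoercive : Filter.Tendsto (huberObjective B x) (Filter.cocompact _) Filter.atTop :=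
    Filter.tendsto_atTop_mono
      (fun v => (norm_le_norm1 v).trans (le_add_of_nonneg_right
        (mul_nonneg (by norm_num) (norm2sq_nonneg _))))
      tendsto_norm_cocompact_atTop
  obtain ⟨v, hv⟩ := (continuous_huberObjective B x).exists_forall_le hcoercive
  exact ⟨v, (genHuber_le_huberObjective B x v).antisymm (le_genHuber B hv)⟩

theorem genHuber_add_le (x h : Fin N → ℝ) : genHuber B (x + h) ≤ genHuber B x + norm1 h := by
  rw [← sub_le_iff_le_add]
  refine le_genHuber B fun v => ?_
  calc genHuber B (x + h) - norm1 h ≤ huberObjective B (x + h) (v + h) - norm1 h :=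
        sub_le_sub_right (genHuber_le_huberObjective B _ _) _
    _ = norm1 (v + h) - norm1 h + 1 / 2 * norm2sq (B *ᵥ (x - v)) := by
        rw [huberObjective, add_sub_add_right_eq_sub]; ring
    _ ≤ huberObjective B x v := by
        rw [huberObjective]; linarith [norm1_add_le v h]

theorem two_mul_huberObjective_le (x h v w : Fin N → ℝ) :
    2 * huberObjective B x ((1 / 2 : ℝ) • (v + w)) ≤
      huberObjective B (x + h) v + huberObjective B (x - h) w := by
  have hres : B *ᵥ (x - (1 / 2 : ℝ) • (v + w)) =
      (1 / 2 : ℝ) • (B *ᵥ (x + h - v) + B *ᵥ (x - h - w)) := by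
    rw [← mulVec_add, ← mulVec_smul]
    congr 1
    module
  have hl1 := norm1_add_le v w
  have hl2 := norm2sq_add_le (B *ᵥ (x + h - v)) (B *ᵥ (x - h - w))
  simp only [huberObjective, hres, norm1_smul, norm2sq_smul]
  norm_num
  linarith

theorem two_mul_genHuber_le (x h : Fin N → ℝ) :
    2 * genHuber B x ≤ genHuber B (x + h) + genHuber B (x - h) := by
  rw [← sub_le_iff_le_add]
  refine le_genHuber B fun v => ?_
  rw [sub_le_iff_le_add, ← sub_le_iff_le_add']
  refine le_genHuber B fun w => ?_
  linarith [two_mul_huberObjective_le B x h v w,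
    genHuber_le_huberObjective B x ((1 / 2 : ℝ) • (v + w))]

theorem genHuber_add_le_of_eq_huberObjective {x v : Fin N → ℝ}
    (hv : genHuber B x = huberObjective B x v) (h : Fin N → ℝ) :
    genHuber B (x + h) ≤
      genHuber B x + ((B *ᵥ (x - v)) ᵥ* B) ⬝ᵥ h + 1 / 2 * norm2sq (B *ᵥ h) := by
  have hres : B *ᵥ (x + h - v) = B *ᵥ (x - v) + B *ᵥ h := by
    rw [← mulVec_add, add_sub_right_comm]
  have := genHuber_le_huberObjective B (x + h) v
  rw [huberObjective, hres, norm2sq_add, dotProduct_mulVec] at this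
  rw [hv, huberObjective]
  linarith

theorem exists_norm2sq_mulVec_le : ∃ C, ∀ h, norm2sq (B *ᵥ h) ≤ C * ‖h‖ ^ 2 := by
  let A := LinearMap.toContinuousLinearMap (toLin' B)
  refine ⟨M * ‖A‖ ^ 2, fun h => ?_⟩
  calc norm2sq (B *ᵥ h) ≤ M * ‖A h‖ ^ 2 := norm2sq_le_card_mul_sq_norm _
    _ ≤ M * (‖A‖ * ‖h‖) ^ 2 := by gcongr; exact A.le_opNorm h
    _ = M * ‖A‖ ^ 2 * ‖h‖ ^ 2 := by ring

theorem hasFDerivAt_genHuber {x v : Fin N → ℝ} (hv : genHuber B x = huberObjective B x v) :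
    HasFDerivAt (genHuber B)
      (LinearMap.toContinuousLinearMap (dotProductEquiv ℝ (Fin N) ((B *ᵥ (x - v)) ᵥ* B))) x := by
  obtain ⟨C, hC⟩ := exists_norm2sq_mulVec_le B
  refine hasFDerivAt_of_two_mul_le_of_le_add_sq (C := 1 / 2 * C) (two_mul_genHuber_le B x)
    fun h => ?_
  have := genHuber_add_le_of_eq_huberObjective B hv h
  simp only [LinearMap.coe_toContinuousLinearMap', dotProductEquiv_apply_apply]
  nlinarith [hC h]

end Huber

/-- The generalized Huber function is differentiable and every partial derivative
is bounded by 1 in absolute value: `‖∇S_B(x)‖_∞ ≤ 1`. -/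
theorem genHuber_gradient_bound {M N : ℕ} (B : Matrix (Fin M) (Fin N) ℝ) :
    ∀ x : Fin N → ℝ, DifferentiableAt ℝ (genHuber B) x ∧
      ∀ n : Fin N, |fderiv ℝ (genHuber B) x (Pi.single n 1)| ≤ 1 := by
  intro x
  obtain ⟨v, hv⟩ := exists_genHuber_eq_huberObjective B x
  have hder := hasFDerivAt_genHuber B hv
  refine ⟨hder.differentiableAt, fun n => ?_⟩
  have := abs_apply_le_norm1_of_hasFDerivAt hder (genHuber_add_le B) (Pi.single n 1)
  rwa [norm1_single, abs_one, ← hder.fderiv] at this
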